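/- arXiv:1612.03411 — 2 statements merged into one kernel-verified Lean document; each statement's English description precedes it below -/
import Mathlib

section
/- Let β, β' ∈ R'. Then β ∼ β' if and only if there exists an integer m with 1 ≤ m ≤ e(β) and gcd(m, e(β)) = 1 such that β'_j ≡ m·β_j (mod r_j) for all 1 ≤ j ≤ n. -/
open Finset

section Setup

variable {n : ℕ}

/-- The index set `R' = ∏_j {0,…,r_j−1}`. -/
def Rfin' (r : Fin (n+1) → ℕ) : Finset (Fin (n+1) → ℕ) :=
  Fintype.piFinset fun j => Finset.range (r j)

/-- `|G| = r_1 ⋯ r_n`. -/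
def cardG (r : Fin (n+1) → ℕ) : ℕ := ∏ j, r j

/-- `e(β) = lcm_j (r_j / gcd(r_j, β_j))`. -/
def eOf (r : Fin (n+1) → ℕ) (β : Fin (n+1) → ℕ) : ℕ :=
  Finset.univ.lcm fun j => r j / Nat.gcd (r j) (β j)

/-- `A_β`. -/
def Aset (r : Fin (n+1) → ℕ) (β : Fin (n+1) → ℕ) : Finset (Fin (n+1) → ℕ) :=
  (Fintype.piFinset fun j => Finset.Icc 1 (r j)).filter
    fun ω => (∑ j, (r (Fin.last n) / r j) * ω j * β j) % r (Fin.last n) = 0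

/-- `A_{β,p}`. -/
def Apset (r : Fin (n+1) → ℕ) (p : ℕ) (β : Fin (n+1) → ℕ) : Finset (Fin (n+1) → ℕ) :=
  (Fintype.piFinset fun j => Finset.Icc 1 (p ^ padicValNat p (r j))).filter
    fun ω => (∑ j, p ^ (padicValNat p (r (Fin.last n)) - padicValNat p (r j)) * ω j * β j)
      % p ^ padicValNat p (r (Fin.last n)) = 0

end Setup

/-! `A_β` is the zero set, in a box of representatives of `G = ∏ ℤ/r_j`, of the character
`χ_β : ω ↦ ∑_j (r_n/r_j) ω_j β_j` of `G` with values in `ℤ/r_n`, so `β ∼ β'` says that `χ_β` and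
`χ_β'` have the same kernel. Two homomorphisms into a finite cyclic group with the same kernel
differ by an automorphism of their common image, a cyclic group of order `e(β)`, i.e. by
multiplication with some `m` prime to `e(β)`; on basis vectors `χ_β' = m χ_β` reads
`β'_j ≡ m β_j (mod r_j)`. -/

section CyclicCodomain

variable {A C : Type*} [AddCommGroup A] [AddCommGroup C]

theorem IsAddCyclic.mem_zmultiples_of_addOrderOf_eq [Finite C] [IsAddCyclic C] {y c : C}
    (h : addOrderOf c = addOrderOf y) : c ∈ AddSubgroup.zmultiples y := by
  -- the solutions of `addOrderOf y • z = 0` form a subgroup of order at most `addOrderOf y`,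
  -- which `zmultiples y` already fills
  set K := (nsmulAddMonoidHom (α := C) (addOrderOf y)).ker
  have hyK : AddSubgroup.zmultiples y ≤ K :=
    (AddSubgroup.zmultiples_le).mpr (addOrderOf_nsmul_eq_zero y)
  have hcard : Nat.card K ≤ Nat.card (AddSubgroup.zmultiples y) := by
    rw [IsAddCyclic.card_nsmulAddMonoidHom_ker, Nat.card_zmultiples]
    exact Nat.gcd_le_right _ (addOrderOf_pos y)
  rw [AddSubgroup.eq_of_le_of_card_ge hyK hcard]
  show addOrderOf y • c = 0
  rw [← h, addOrderOf_nsmul_eq_zero]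

theorem AddMonoidHom.ker_eq_ker_of_eq_nsmul {f g : A →+ C} {m : ℕ}
    (hm : m.Coprime (Nat.card f.range)) (hg : ∀ x, g x = m • f x) : f.ker = g.ker := by
  ext x
  simp only [AddMonoidHom.mem_ker, hg]
  refine ⟨fun h => by rw [h, nsmul_zero], fun h => ?_⟩
  have hcard : addOrderOf (f x) ∣ Nat.card f.range :=
    AddSubgroup.addOrderOf_mk (H := f.range) (f x) ⟨x, rfl⟩ ▸ addOrderOf_dvd_natCard _
  have hord : addOrderOf (f x) ∣ 1 := hm ▸ Nat.dvd_gcd (addOrderOf_dvd_of_nsmul_eq_zero h) hcard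
  simpa using hord

theorem AddMonoidHom.exists_coprime_of_ker_eq [Finite C] [IsAddCyclic C] {f g : A →+ C}
    (h : f.ker = g.ker) : ∃ u : ℕ, u.Coprime (Nat.card f.range) ∧ ∀ x, g x = u • f x := by
  obtain ⟨⟨_, hy⟩, hgen⟩ := IsAddCyclic.exists_generator (α := f.range)
  obtain ⟨x₀, rfl⟩ := AddMonoidHom.mem_range.mp hy
  have hg : ∀ x (k : ℤ), f x = k • f x₀ → g x = k • g x₀ := by
    intro x k hk
    have : x - k • x₀ ∈ g.ker := h ▸ by simp [hk]
    simpa [sub_eq_zero] using this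
  have hord : addOrderOf (g x₀) = addOrderOf (f x₀) := by
    refine addOrderOf_eq_addOrderOf_iff.mpr fun k => ?_
    have := SetLike.ext_iff.mp h (k • x₀)
    simpa using this.symm
  obtain ⟨u, hu⟩ := (AddSubmonoid.mem_multiples_iff _ _).mp (mem_multiples_iff_mem_zmultiples.mpr
    (IsAddCyclic.mem_zmultiples_of_addOrderOf_eq hord))
  have hcard : Nat.card f.range = addOrderOf (f x₀) := by
    rw [← addOrderOf_eq_card_of_forall_mem_zmultiples hgen, AddSubgroup.addOrderOf_mk]
  refine ⟨u, ?_, fun x => ?_⟩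
  · rw [← hu, addOrderOf_nsmul, Nat.div_eq_self] at hord
    rw [hcard, Nat.coprime_comm]
    exact hord.resolve_left (addOrderOf_pos _).ne'
  · obtain ⟨k, hk⟩ := AddSubgroup.mem_zmultiples_iff.mp (hgen ⟨f x, x, rfl⟩)
    have hfx : f x = k • f x₀ := by simpa [Subtype.ext_iff] using hk.symm
    rw [hg x k hfx, hfx, ← hu, smul_comm]

theorem Nat.Coprime.exists_modEq_mem_Icc {u e : ℕ} (he : 0 < e) (hu : u.Coprime e) :
    ∃ m, 1 ≤ m ∧ m ≤ e ∧ m.Coprime e ∧ m ≡ u [MOD e] := by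
  have hm : (u + e - 1) % e + 1 ≡ u [MOD e] := by
    calc (u + e - 1) % e + 1 ≡ (u + e - 1) + 1 [MOD e] := (Nat.mod_modEq _ _).add_right 1
      _ = u + e := by omega
      _ ≡ u [MOD e] := Nat.add_modEq_right
  exact ⟨_, by omega, Nat.mod_lt _ he, hm.gcd_eq.trans hu, hm⟩

theorem AddMonoidHom.ker_eq_ker_iff [Finite C] [IsAddCyclic C] (f g : A →+ C) :
    f.ker = g.ker ↔ ∃ m : ℕ, 1 ≤ m ∧ m ≤ Nat.card f.range ∧ m.Coprime (Nat.card f.range) ∧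
      ∀ x, g x = m • f x := by
  refine ⟨fun h => ?_, fun ⟨m, _, _, hm, hg⟩ => ker_eq_ker_of_eq_nsmul hm hg⟩
  obtain ⟨u, hu, hg⟩ := exists_coprime_of_ker_eq h
  obtain ⟨m, hm1, hme, hm, hmu⟩ := hu.exists_modEq_mem_Icc Nat.card_pos
  refine ⟨m, hm1, hme, hm, fun x => ?_⟩
  have hx : addOrderOf (f x) ∣ Nat.card f.range :=
    AddSubgroup.addOrderOf_mk (H := f.range) (f x) ⟨x, rfl⟩ ▸ addOrderOf_dvd_natCard _
  rw [hg, nsmul_eq_nsmul_iff_modEq]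
  exact (hmu.of_dvd hx).symm

theorem Nat.card_range_linearCombination [Finite C] [IsAddCyclic C] {ι : Type*} [Fintype ι]
    (c : ι → C) : Nat.card (Fintype.linearCombination ℤ c).toAddMonoidHom.range =
      univ.lcm fun i => addOrderOf (c i) := by
  classical
  set f := (Fintype.linearCombination ℤ c).toAddMonoidHom
  rw [← IsAddCyclic.exponent_eq_card]
  refine Nat.dvd_antisymm (AddMonoid.exponent_dvd_of_forall_nsmul_eq_zero ?_) (Finset.lcm_dvd ?_)
  · rintro ⟨_, x, rfl⟩
    ext
    simp only [f, LinearMap.toAddMonoidHom_coe, Fintype.linearCombination_apply,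
      AddSubgroup.coe_nsmul, Finset.smul_sum, ZeroMemClass.coe_zero]
    refine Finset.sum_eq_zero fun i _ => ?_
    rw [smul_comm, addOrderOf_dvd_iff_nsmul_eq_zero.mp
      (Finset.dvd_lcm (f := fun i => addOrderOf (c i)) (mem_univ i)), smul_zero]
  · intro i _
    have hi : c i ∈ f.range := ⟨Pi.single i 1, by simp [f]⟩
    exact AddSubgroup.addOrderOf_mk (c i) hi ▸ AddMonoid.addOrder_dvd_exponent _

end CyclicCodomain

section CharacterForm

variable {n : ℕ}

def charCoeff (r β : Fin (n+1) → ℕ) (j : Fin (n+1)) : ZMod (r (Fin.last n)) :=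
  ((r (Fin.last n) / r j * β j : ℕ) : ZMod (r (Fin.last n)))

-- `χ_β` pulled back along `ℤ^{n+1} → G`, so that representatives can be handled in `ℤ`
def charForm (r β : Fin (n+1) → ℕ) : (Fin (n+1) → ℤ) →+ ZMod (r (Fin.last n)) :=
  (Fintype.linearCombination ℤ (charCoeff r β)).toAddMonoidHom

variable {r : Fin (n+1) → ℕ}

theorem charForm_apply (β : Fin (n+1) → ℕ) (x : Fin (n+1) → ℤ) :
    charForm r β x = ∑ j, x j • charCoeff r β j :=
  Fintype.linearCombination_apply ℤ _ x

theorem mem_Aset_iff {β ω : Fin (n+1) → ℕ} :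
    ω ∈ Aset r β ↔ (∀ j, ω j ∈ Icc 1 (r j)) ∧ charForm r β (fun j => ω j) = 0 := by
  rw [Aset, mem_filter, Fintype.mem_piFinset, ← Nat.dvd_iff_mod_eq_zero,
    ← ZMod.natCast_eq_zero_iff, charForm_apply]
  push_cast [charCoeff]
  simp only [zsmul_eq_mul, Int.cast_natCast, mul_comm, mul_left_comm]

theorem addOrderOf_charCoeff (hr : ∀ j, 0 < r j) (hdvd : ∀ j, r j ∣ r (Fin.last n))
    (β : Fin (n+1) → ℕ) (j : Fin (n+1)) :
    addOrderOf (charCoeff r β j) = r j / (r j).gcd (β j) := by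
  obtain ⟨a, ha⟩ := hdvd j
  have ha0 : a ≠ 0 := by rintro rfl; simpa [ha] using hr (Fin.last n)
  rw [charCoeff, ZMod.addOrderOf_coe _ (hr _).ne', ha, Nat.mul_div_cancel_left _ (hr j),
    mul_comm (r j), Nat.gcd_mul_left, Nat.mul_div_mul_left _ _ (Nat.pos_of_ne_zero ha0)]

theorem Nat.card_range_charForm (hr : ∀ j, 0 < r j) (hdvd : ∀ j, r j ∣ r (Fin.last n))
    (β : Fin (n+1) → ℕ) : Nat.card (charForm r β).range = eOf r β := by
  have : NeZero (r (Fin.last n)) := ⟨(hr _).ne'⟩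
  simp only [charForm, Nat.card_range_linearCombination, addOrderOf_charCoeff hr hdvd, eOf]

theorem charForm_eq_of_intModEq (hr : ∀ j, 0 < r j) (hdvd : ∀ j, r j ∣ r (Fin.last n))
    (β : Fin (n+1) → ℕ) {x y : Fin (n+1) → ℤ} (h : ∀ j, x j ≡ y j [ZMOD r j]) :
    charForm r β x = charForm r β y := by
  simp only [charForm_apply]
  refine Finset.sum_congr rfl fun j _ => zsmul_eq_zsmul_iff_modEq.mpr ((h j).of_dvd ?_)
  rw [addOrderOf_charCoeff hr hdvd]
  exact Int.natCast_dvd_natCast.mpr (Nat.div_dvd_of_dvd (Nat.gcd_dvd_left _ _))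

theorem exists_mem_Icc_intModEq {m : ℕ} (hm : 0 < m) (x : ℤ) :
    ∃ w : ℕ, w ∈ Icc 1 m ∧ x ≡ w [ZMOD m] := by
  have hm' : (0 : ℤ) < m := Int.natCast_pos.mpr hm
  have hlt := Int.emod_lt_of_pos (x - 1) hm'
  have hnonneg := Int.emod_nonneg (x - 1) hm'.ne'
  refine ⟨((x - 1) % m).toNat + 1, by simp only [mem_Icc]; omega, ?_⟩
  push_cast
  rw [Int.toNat_of_nonneg hnonneg]
  calc x = (x - 1) + 1 := by ring
    _ ≡ (x - 1) % m + 1 [ZMOD m] := (Int.mod_modEq _ _).symm.add_right 1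

theorem Aset_eq_iff_ker_eq (hr : ∀ j, 0 < r j) (hdvd : ∀ j, r j ∣ r (Fin.last n))
    (β β' : Fin (n+1) → ℕ) : Aset r β = Aset r β' ↔ (charForm r β).ker = (charForm r β').ker := by
  refine ⟨fun h => ?_, fun h => ?_⟩
  · ext x
    choose ω hω hxω using fun j => exists_mem_Icc_intModEq (hr j) (x j)
    have hmem := Finset.ext_iff.mp h ω
    simp only [mem_Aset_iff, hω, implies_true, true_and] at hmem
    simp only [AddMonoidHom.mem_ker, charForm_eq_of_intModEq hr hdvd _ hxω, hmem]
  · ext ω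
    simp only [mem_Aset_iff, ← AddMonoidHom.mem_ker, h]

theorem charCoeff_eq_nsmul_iff (hr : ∀ j, 0 < r j) (hdvd : ∀ j, r j ∣ r (Fin.last n))
    {β β' : Fin (n+1) → ℕ} {m : ℕ} {j : Fin (n+1)} :
    charCoeff r β' j = m • charCoeff r β j ↔ β' j ≡ m * β j [MOD r j] := by
  obtain ⟨a, ha⟩ := hdvd j
  have ha0 : a ≠ 0 := by rintro rfl; simpa [ha] using hr (Fin.last n)
  rw [charCoeff, charCoeff, nsmul_eq_mul, ← Nat.cast_mul, ZMod.natCast_eq_natCast_iff, ha,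
    Nat.mul_div_cancel_left _ (hr j), mul_left_comm, mul_comm (r j),
    Nat.ModEq.mul_left_cancel_iff' ha0]

theorem charForm_eq_nsmul_iff (hr : ∀ j, 0 < r j) (hdvd : ∀ j, r j ∣ r (Fin.last n))
    {β β' : Fin (n+1) → ℕ} {m : ℕ} :
    (∀ x, charForm r β' x = m • charForm r β x) ↔ ∀ j, β' j ≡ m * β j [MOD r j] := by
  simp_rw [← charCoeff_eq_nsmul_iff hr hdvd]
  refine ⟨fun h j => by simpa [charForm] using h (Pi.single j 1), fun h x => ?_⟩
  simp only [charForm_apply, h, Finset.smul_sum, smul_comm m]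

end CharacterForm

theorem stmt_14_general (r : Fin (n+1) → ℕ) (hr : ∀ j, 0 < r j)
    (hchain : ∀ i j : Fin (n+1), i ≤ j → r i ∣ r j)
    (β β' : Fin (n+1) → ℕ) :
    Aset r β = Aset r β' ↔
      ∃ m : ℕ, 1 ≤ m ∧ m ≤ eOf r β ∧ Nat.Coprime m (eOf r β) ∧
        ∀ j, β' j ≡ m * β j [MOD r j] := by
  have hdvd : ∀ j, r j ∣ r (Fin.last n) := fun j => hchain j _ (Fin.le_last j)
  have : NeZero (r (Fin.last n)) := ⟨(hr _).ne'⟩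
  rw [Aset_eq_iff_ker_eq hr hdvd, AddMonoidHom.ker_eq_ker_iff, Nat.card_range_charForm hr hdvd]
  simp_rw [charForm_eq_nsmul_iff hr hdvd]

theorem stmt_14 (r : Fin (n+1) → ℕ) (hr : ∀ j, 0 < r j)
    (hchain : ∀ i j : Fin (n+1), i ≤ j → r i ∣ r j)
    (β β' : Fin (n+1) → ℕ) (hβ : β ∈ Rfin' r) (hβ' : β' ∈ Rfin' r) :
    Aset r β = Aset r β' ↔
      ∃ m : ℕ, 1 ≤ m ∧ m ≤ eOf r β ∧ Nat.Coprime m (eOf r β) ∧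
        ∀ j, β' j ≡ m * β j [MOD r j] :=
  stmt_14_general r hr hchain β β'
end

section
/- Let p be a prime dividing r_n and β ∈ R'. Consider the group homomorphism φ_{β,p} : ℤ/p^{v_p(r_1)}ℤ × ⋯ × ℤ/p^{v_p(r_n)}ℤ → ℤ/p^{v_p(r_n)}ℤ given by φ_{β,p}(x_1,…,x_n) = Σ_{j=1}^n p^{v_p(r_n)−v_p(r_j)}·β_j·x_j. Then the image of φ_{β,p} is the cyclic subgroup of ℤ/p^{v_p(r_n)}ℤ generated by the class of p^{v_p(r_n)−v_p(e(β))}; in particular the image has exactly p^{v_p(e(β))} elements and the kernel has exactly p^{v_p(r_1⋯r_n) − v_p(e(β))} elements. -/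
open Finset

/- Write `M = v_p(r_n)`, `m_j = v_p(r_j)` and `c_j = p^(M - m_j) β_j`. The range of `φ` is generated by
the images `c_j` of the basis vectors, and in the cyclic group `ℤ/p^M` the element `c_j` generates
the same subgroup as `gcd(c_j, p^M) = p^(M - d_j)`, where `d_j = v_p(r_j / gcd(r_j, β_j))`. These
subgroups are nested, so the range is generated by the one with the largest `d_j`, and
`max_j d_j = v_p(e(β))` because `v_p` turns `lcm` into `max`. The cardinalities follow from the
order of `p^(M - v)` in `ℤ/p^M` and `|ker φ| · |im φ| = p^(m_1 + ⋯ + m_n)`. -/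

open AddSubgroup

theorem ZMod.natCast_gcd_mem_zmultiples (a N : ℕ) :
    ((a.gcd N : ℕ) : ZMod N) ∈ zmultiples (a : ZMod N) := by
  refine mem_zmultiples_iff.mpr ⟨a.gcdA N, ?_⟩
  have hbezout := congrArg (fun z : ℤ => (z : ZMod N)) (Nat.gcd_eq_gcd_ab a N)
  push_cast [ZMod.natCast_self] at hbezout
  rw [zsmul_eq_mul, hbezout, mul_comm]; ring

theorem ZMod.card_zmultiples_natCast_pow_sub {p M k : ℕ} (hp : 0 < p) (hk : k ≤ M) :
    Nat.card (zmultiples ((p ^ (M - k) : ℕ) : ZMod (p ^ M))) = p ^ k := by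
  rw [Nat.card_zmultiples, ZMod.addOrderOf_coe _ (pow_pos hp M).ne',
    Nat.gcd_eq_right (pow_dvd_pow p (M.sub_le k)), Nat.pow_div (M.sub_le k) hp,
    Nat.sub_sub_self hk]

theorem AddMonoidHom.card_ker_mul_card_range {G H : Type*} [AddGroup G] [AddGroup H]
    (φ : G →+ H) : Nat.card {x // φ x = 0} * Nat.card (Set.range φ) = Nat.card G := by
  rw [← φ.ker.card_mul_index, AddSubgroup.index_ker]
  rfl

theorem AddMonoidHom.card_ker_eq_card_div_card_range {G H : Type*} [AddGroup G] [AddGroup H]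
    [Finite G] (φ : G →+ H) :
    Nat.card {x // φ x = 0} = Nat.card G / Nat.card (Set.range φ) :=
  Nat.eq_div_of_mul_eq_left Nat.card_pos.ne' φ.card_ker_mul_card_range

section DiagonalForm

variable {ι : Type*} [Fintype ι] [DecidableEq ι] {N : ℕ} {Ns : ι → ℕ} {c : ι → ℕ}
  {φ : (∀ j, ZMod (Ns j)) →+ ZMod N}

theorem apply_single_one_of_eq_sum
    (hφ : ∀ x, φ x = ∑ j, (c j : ZMod N) * ((x j).val : ZMod N))
    (hc : ∀ j, N ∣ c j * Ns j) (j : ι) : φ (Pi.single j 1) = c j := by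
  rw [hφ, Finset.sum_eq_single j (fun i _ hij => by simp [Pi.single_eq_of_ne hij]) (by simp),
    Pi.single_eq_same, ZMod.val_one_eq_one_mod]
  by_cases hj : Ns j = 1
  · have hcj : (c j : ZMod N) = 0 := (ZMod.natCast_eq_zero_iff _ _).mpr (by simpa [hj] using hc j)
    simp [hcj]
  · simp [Nat.one_mod_eq_one.mpr hj]

theorem range_eq_zmultiples_of_eq_sum
    (hφ : ∀ x, φ x = ∑ j, (c j : ZMod N) * ((x j).val : ZMod N))
    (hc : ∀ j, N ∣ c j * Ns j) (j₀ : ι) (hj₀ : ∀ j, (c j₀).gcd N ∣ (c j).gcd N) :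
    Set.range φ = zmultiples (((c j₀).gcd N : ℕ) : ZMod N) := by
  rw [← AddMonoidHom.coe_range]
  congr 1
  refine le_antisymm ?_ ?_
  · rintro _ ⟨x, rfl⟩
    rw [hφ]
    refine sum_mem fun j _ => ?_
    obtain ⟨t, ht⟩ := (hj₀ j).trans (Nat.gcd_dvd_left _ _)
    have hmul : (c j : ZMod N) * (x j).val = (t * (x j).val) • (((c j₀).gcd N : ℕ) : ZMod N) := by
      rw [nsmul_eq_mul, ht]; push_cast; ring
    exact hmul ▸ nsmul_mem (mem_zmultiples _) _
  · have hc₀ : (c j₀ : ZMod N) ∈ φ.range := ⟨_, apply_single_one_of_eq_sum hφ hc j₀⟩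
    exact zmultiples_le.mpr (zmultiples_le.mpr hc₀ (ZMod.natCast_gcd_mem_zmultiples _ _))

end DiagonalForm

section Valuations

variable {p : ℕ} [hp : Fact p.Prime]

theorem padicValNat_le_of_dvd {a b : ℕ} (hb : b ≠ 0) (hab : a ∣ b) :
    padicValNat p a ≤ padicValNat p b :=
  (padicValNat_dvd_iff_le hb).mp (pow_padicValNat_dvd.trans hab)

theorem padicValNat_finset_lcm {ι : Type*} {s : Finset ι} {f : ι → ℕ} (hf : ∀ j ∈ s, f j ≠ 0) :
    padicValNat p (s.lcm f) = s.sup fun j => padicValNat p (f j) := by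
  simp only [← Nat.factorization_def _ hp.out, Finset.factorization_lcm hf]

theorem padicValNat_finset_prod {ι : Type*} {s : Finset ι} {f : ι → ℕ} (hf : ∀ j ∈ s, f j ≠ 0) :
    padicValNat p (∏ j ∈ s, f j) = ∑ j ∈ s, padicValNat p (f j) := by
  simp only [← Nat.factorization_def _ hp.out, Nat.factorization_prod_apply hf]

theorem Nat.gcd_prime_pow_of_padicValNat_le {a m : ℕ} (ha : a ≠ 0) (hm : padicValNat p a ≤ m) :
    a.gcd (p ^ m) = p ^ padicValNat p a := by
  obtain ⟨k, -, hk⟩ := (Nat.dvd_prime_pow hp.out).mp (a.gcd_dvd_right (p ^ m))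
  have hka : k ≤ padicValNat p a := (padicValNat_dvd_iff_le ha).mp (hk ▸ a.gcd_dvd_left _)
  refine Nat.dvd_antisymm (hk ▸ pow_dvd_pow p hka) ?_
  exact Nat.dvd_gcd pow_padicValNat_dvd (pow_dvd_pow p hm)

theorem gcd_pow_sub_padicValNat_mul {r b M : ℕ} (hr : r ≠ 0) (hrM : padicValNat p r ≤ M) :
    (p ^ (M - padicValNat p r) * b).gcd (p ^ M) =
      p ^ (M - padicValNat p (r / r.gcd b)) := by
  set m := padicValNat p r
  have hgr : r.gcd b ∣ r := r.gcd_dvd_left b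
  have hg0 : r.gcd b ≠ 0 := Nat.gcd_ne_zero_left hr
  have hkm : padicValNat p (r.gcd b) ≤ m := padicValNat_le_of_dvd hr hgr
  have hbm : b.gcd (p ^ m) = p ^ padicValNat p (r.gcd b) := by
    rw [← Nat.gcd_eq_right (pow_padicValNat_dvd (n := r)), ← Nat.gcd_assoc, Nat.gcd_comm b r,
      Nat.gcd_prime_pow_of_padicValNat_le hg0 hkm]
  have hpM : p ^ M = p ^ (M - m) * p ^ m := by rw [← pow_add, Nat.sub_add_cancel hrM]
  rw [padicValNat.div_of_dvd hgr, hpM, Nat.gcd_mul_left, hbm, ← pow_add]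
  congr 1
  omega

end Valuations

section Invariants

variable {n : ℕ} {r : Fin (n+1) → ℕ} {p : ℕ} [Fact p.Prime]

theorem padicValNat_eOf (hr : ∀ j, 0 < r j) (β : Fin (n+1) → ℕ) :
    padicValNat p (eOf r β) = univ.sup fun j => padicValNat p (r j / (r j).gcd (β j)) :=
  padicValNat_finset_lcm fun j _ =>
    (Nat.div_pos (Nat.gcd_le_left _ (hr j)) (Nat.gcd_pos_of_pos_left _ (hr j))).ne'

theorem padicValNat_cardG (hr : ∀ j, 0 < r j) :
    padicValNat p (cardG r) = ∑ j, padicValNat p (r j) :=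
  padicValNat_finset_prod fun j _ => (hr j).ne'

end Invariants

theorem stmt_18_general (r : Fin (n+1) → ℕ) (hr : ∀ j, 0 < r j)
    (hchain : ∀ i j : Fin (n+1), i ≤ j → r i ∣ r j)
    (p : ℕ) (hp : p.Prime)
    (β : Fin (n+1) → ℕ)
    (φ : (∀ j : Fin (n+1), ZMod (p ^ padicValNat p (r j))) →+
      ZMod (p ^ padicValNat p (r (Fin.last n))))
    (hφ : ∀ x, φ x = ∑ j, ((p ^ (padicValNat p (r (Fin.last n)) - padicValNat p (r j)) * β j : ℕ) :
        ZMod (p ^ padicValNat p (r (Fin.last n)))) * ((x j).val : ZMod (p ^ padicValNat p (r (Fin.last n))))) :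
    Set.range φ = ↑(AddSubgroup.zmultiples
        ((p ^ (padicValNat p (r (Fin.last n)) - padicValNat p (eOf r β)) : ℕ) :
          ZMod (p ^ padicValNat p (r (Fin.last n))))) ∧
    Nat.card (Set.range φ) = p ^ padicValNat p (eOf r β) ∧
    Nat.card {x // φ x = 0} = p ^ (padicValNat p (cardG r) - padicValNat p (eOf r β)) := by
  have : Fact p.Prime := ⟨hp⟩
  set d : Fin (n+1) → ℕ := fun j => padicValNat p (r j / (r j).gcd (β j))
  have hmM (j) : padicValNat p (r j) ≤ padicValNat p (r (Fin.last n)) :=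
    padicValNat_le_of_dvd (hr _).ne' (hchain j _ (Fin.le_last j))
  have hdm (j) : d j ≤ padicValNat p (r j) :=
    padicValNat_le_of_dvd (hr j).ne' (Nat.div_dvd_of_dvd (Nat.gcd_dvd_left _ _))
  have hgcd (j) : (p ^ (padicValNat p (r (Fin.last n)) - padicValNat p (r j)) * β j).gcd
      (p ^ padicValNat p (r (Fin.last n))) = p ^ (padicValNat p (r (Fin.last n)) - d j) :=
    gcd_pow_sub_padicValNat_mul (hr j).ne' (hmM j)
  obtain ⟨j₀, -, hj₀⟩ := Finset.exists_mem_eq_sup univ univ_nonempty d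
  have he : padicValNat p (eOf r β) = d j₀ := (padicValNat_eOf hr β).trans hj₀
  have hrange := range_eq_zmultiples_of_eq_sum hφ
    (fun j => by rw [mul_right_comm, ← pow_add, Nat.sub_add_cancel (hmM j)]; exact dvd_mul_right _ _)
    j₀ (fun j => by
      rw [hgcd, hgcd]; exact pow_dvd_pow p (Nat.sub_le_sub_left (hj₀ ▸ le_sup (mem_univ j)) _))
  rw [hgcd] at hrange
  have hcard : Nat.card (Set.range φ) = p ^ d j₀ := by
    rw [hrange, SetLike.coe_sort_coe,
      ZMod.card_zmultiples_natCast_pow_sub hp.pos ((hdm j₀).trans (hmM j₀))]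
  refine ⟨he ▸ hrange, he ▸ hcard, ?_⟩
  have hle : d j₀ ≤ ∑ j, padicValNat p (r j) :=
    (hdm j₀).trans (single_le_sum (f := fun j => padicValNat p (r j)) (by simp) (mem_univ j₀))
  rw [φ.card_ker_eq_card_div_card_range, hcard, Nat.card_pi]
  simp only [Nat.card_zmod, Finset.prod_pow_eq_pow_sum]
  rw [he, padicValNat_cardG hr, Nat.pow_div hle hp.pos]

theorem stmt_18 (r : Fin (n+1) → ℕ) (hr : ∀ j, 0 < r j)
    (hchain : ∀ i j : Fin (n+1), i ≤ j → r i ∣ r j)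
    (p : ℕ) (hp : p.Prime) (hpr : p ∣ r (Fin.last n))
    (β : Fin (n+1) → ℕ) (hβ : β ∈ Rfin' r)
    (φ : (∀ j : Fin (n+1), ZMod (p ^ padicValNat p (r j))) →+
      ZMod (p ^ padicValNat p (r (Fin.last n))))
    (hφ : ∀ x, φ x = ∑ j, ((p ^ (padicValNat p (r (Fin.last n)) - padicValNat p (r j)) * β j : ℕ) :
        ZMod (p ^ padicValNat p (r (Fin.last n)))) * ((x j).val : ZMod (p ^ padicValNat p (r (Fin.last n))))) :
    Set.range φ = ↑(AddSubgroup.zmultiples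
        ((p ^ (padicValNat p (r (Fin.last n)) - padicValNat p (eOf r β)) : ℕ) :
          ZMod (p ^ padicValNat p (r (Fin.last n))))) ∧
    Nat.card (Set.range φ) = p ^ padicValNat p (eOf r β) ∧
    Nat.card {x // φ x = 0} = p ^ (padicValNat p (cardG r) - padicValNat p (eOf r β)) :=
  stmt_18_general r hr hchain p hp β φ hφ
end
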